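/- Consider a sequence of pairs (α^(1), β^(1)), …, (α^(T), β^(T)) with entries in {0,1}^n ∪ {∗} satisfying: (i) for all t, at least one of α^(t), β^(t) is not ∗; (ii) for all t < T, α^(t) = α^(t+1) or β^(t) = β^(t+1); (iii) for all t < T, if α^(t) ≠ ∗ and α^(t+1) ≠ ∗ then α^(t) = α^(t+1), and similarly for β. Suppose α^(1) = β^(1) = 0^n and α^(T) = β^(T) = 1^n. Then there exists a sequence γ^(1), …, γ^(T') of strings in {0,1}^n with γ^(1) = 0^n, γ^(T') = 1^n, such that each consecutive pair (γ^(t'), γ^(t'+1)) equals (α^(t), α^(t+1)), (β^(t), β^(t+1)), (α^(t), β^(t)), or (β^(t), α^(t)) for some t. -/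
import Mathlib


/-- From a grid sequence of pairs over {0,1}^n ∪ {∗} one can extract
a sequence γ from 0^n to 1^n whose consecutive pairs come from the grid. -/
theorem stmt_6 (n T : ℕ) (α β : ℕ → Option (Fin n → Bool))
    (h1 : ∀ t ≤ T, α t ≠ none ∨ β t ≠ none)
    (h2 : ∀ t < T, α t = α (t + 1) ∨ β t = β (t + 1))
    (h3 : ∀ t < T, α t ≠ none → α (t + 1) ≠ none → α t = α (t + 1))
    (h4 : ∀ t < T, β t ≠ none → β (t + 1) ≠ none → β t = β (t + 1))
    (hstartα : α 0 = some (fun _ => false)) (hstartβ : β 0 = some (fun _ => false))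
    (hgoalα : α T = some (fun _ => true)) (hgoalβ : β T = some (fun _ => true)) :
    ∃ (T' : ℕ) (γ : ℕ → (Fin n → Bool)),
      γ 0 = (fun _ => false) ∧ γ T' = (fun _ => true) ∧
      ∀ t' < T',
        (∃ t < T, some (γ t') = α t ∧ some (γ (t' + 1)) = α (t + 1)) ∨
        (∃ t < T, some (γ t') = β t ∧ some (γ (t' + 1)) = β (t + 1)) ∨
        (∃ t ≤ T, some (γ t') = α t ∧ some (γ (t' + 1)) = β t) ∨
        (∃ t ≤ T, some (γ t') = β t ∧ some (γ (t' + 1)) = α t) := by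
  classical
  suffices H : ∀ t, t ≤ T → ∃ (T' : ℕ) (γ : ℕ → (Fin n → Bool)),
      γ 0 = (fun _ => false) ∧
      (some (γ T') = α t ∨ some (γ T') = β t) ∧
      ∀ t' < T',
        (∃ t < T, some (γ t') = α t ∧ some (γ (t' + 1)) = α (t + 1)) ∨
        (∃ t < T, some (γ t') = β t ∧ some (γ (t' + 1)) = β (t + 1)) ∨
        (∃ t ≤ T, some (γ t') = α t ∧ some (γ (t' + 1)) = β t) ∨
        (∃ t ≤ T, some (γ t') = β t ∧ some (γ (t' + 1)) = α t) by
    obtain ⟨T', γ, h0, hend, hsteps⟩ := H T le_rfl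
    refine ⟨T', γ, h0, ?_, hsteps⟩
    rcases hend with h | h
    · rw [hgoalα] at h; exact Option.some_inj.mp h
    · rw [hgoalβ] at h; exact Option.some_inj.mp h
  intro t
  induction t with
  | zero =>
    intro _
    exact ⟨0, fun _ _ => false, rfl, Or.inl (by rw [hstartα]),
      fun t' ht' => absurd ht' (Nat.not_lt_zero t')⟩
  | succ t ih =>
    intro ht
    have htT : t < T := ht
    obtain ⟨T', γ, h0, hend, hsteps⟩ := ih htT.le
    rcases hend with hA | hB
    · by_cases hαeq : α t = α (t + 1)
      · exact ⟨T', γ, h0, Or.inl (hA.trans hαeq), hsteps⟩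
      · have hβeq : β t = β (t + 1) := (h2 t htT).resolve_left hαeq
        have hβne : β t ≠ none := by
          intro hn
          have hβ1 : β (t + 1) = none := hβeq ▸ hn
          have hα1 : α (t + 1) ≠ none := (h1 (t + 1) ht).resolve_right (by simp [hβ1])
          have hα0 : α t ≠ none := by rw [← hA]; simp
          exact hαeq (h3 t htT hα0 hα1)
        obtain ⟨w, hw⟩ := Option.ne_none_iff_exists'.mp hβne
        refine ⟨T' + 1, Function.update γ (T' + 1) w, ?_, ?_, ?_⟩
        · rw [Function.update_of_ne (by omega)]; exact h0
        · right; rw [Function.update_self, ← hβeq, hw]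
        · intro t' ht'
          rcases Nat.lt_succ_iff_lt_or_eq.mp ht' with h' | h'
          · have e1 : Function.update γ (T' + 1) w t' = γ t' :=
              Function.update_of_ne (by omega) _ _
            have e2 : Function.update γ (T' + 1) w (t' + 1) = γ (t' + 1) :=
              Function.update_of_ne (by omega) _ _
            rw [e1, e2]; exact hsteps t' h'
          · subst h'
            right; right; left
            refine ⟨t, htT.le, ?_, ?_⟩
            · rw [Function.update_of_ne (by omega)]; exact hA
            · rw [Function.update_self, hw]
    · by_cases hβeq : β t = β (t + 1)
      · exact ⟨T', γ, h0, Or.inr (hB.trans hβeq), hsteps⟩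
      · have hαeq : α t = α (t + 1) := (h2 t htT).resolve_right hβeq
        have hαne : α t ≠ none := by
          intro hn
          have hα1 : α (t + 1) = none := hαeq ▸ hn
          have hβ1 : β (t + 1) ≠ none := (h1 (t + 1) ht).resolve_left (by simp [hα1])
          have hβ0 : β t ≠ none := by rw [← hB]; simp
          exact hβeq (h4 t htT hβ0 hβ1)
        obtain ⟨w, hw⟩ := Option.ne_none_iff_exists'.mp hαne
        refine ⟨T' + 1, Function.update γ (T' + 1) w, ?_, ?_, ?_⟩
        · rw [Function.update_of_ne (by omega)]; exact h0
        · left; rw [Function.update_self, ← hαeq, hw]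
        · intro t' ht'
          rcases Nat.lt_succ_iff_lt_or_eq.mp ht' with h' | h'
          · have e1 : Function.update γ (T' + 1) w t' = γ t' :=
              Function.update_of_ne (by omega) _ _
            have e2 : Function.update γ (T' + 1) w (t' + 1) = γ (t' + 1) :=
              Function.update_of_ne (by omega) _ _
            rw [e1, e2]; exact hsteps t' h'
          · subst h'
            right; right; right
            refine ⟨t, htT.le, ?_, ?_⟩
            · rw [Function.update_of_ne (by omega)]; exact hB
            · rw [Function.update_self, hw]
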